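/- The generalized Leibniz identity for powers of the Laplacian: for any polynomials f, g ∈ C[z_1,...,z_n] and any m ≥ 1, Δ^m(fg) = Σ_{k_1+k_2+k_3=m, k_i≥0} 2^{k_2} · m!/(k_1! k_2! k_3!) · Σ_{s∈N^n, |s|=k_2} (k_2!/s!) · (∂^{k_2} Δ^{k_1} f / ∂z^s) · (∂^{k_2} Δ^{k_3} g / ∂z^s). -/

import Mathlib

open MvPolynomial

/-- The iterated partial derivative `∂^{|s|}/∂z^s` given by the multi-index `s`. -/
noncomputable def mderiv {n : ℕ} (s : Fin n → ℕ) (g : MvPolynomial (Fin n) ℂ) :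
    MvPolynomial (Fin n) ℂ :=
  (List.finRange n).foldr (fun i acc => (fun p => MvPolynomial.pderiv i p)^[s i] acc) g

/-- The Laplace operator `Δ = ∑ ∂²/∂z_i²`. -/
noncomputable def lap {n : ℕ} (g : MvPolynomial (Fin n) ℂ) : MvPolynomial (Fin n) ℂ :=
  ∑ i, MvPolynomial.pderiv i (MvPolynomial.pderiv i g)

/-!
By the product rule `Δ(fg) = Δf·g + 2 ∇f·∇g + f·Δg`, the Laplacian acts on the terms
`T k = 2^{k₁} ∑_{|s|=k₁} (k₁!/s!) ∂^s Δ^{k₀} f · ∂^s Δ^{k₂} g` as the shift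
`T k ↦ ∑ⱼ T (k + eⱼ)` (for the middle index this is Pascal's rule for the inner multinomial
coefficients). Any additive `L` acting as such a shift satisfies
`L^m (T 0) = ∑_{|k|=m} (m!/k!) T k`: on generating functions the shift is multiplication by
`X₁ + ⋯ + X_r`, so this is the multinomial theorem.
-/

section MultinomialSum

open Finset

variable {r : ℕ} {M N : Type*} [AddCommMonoid M] [AddCommMonoid N]

def multinomialSum (r m : ℕ) : ((Fin r → ℕ) → M) →+ M where
  toFun x := ∑ k ∈ Nat.antidiagonalTuple r m, Nat.multinomial univ k • x k
  map_zero' := by simp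
  map_add' x y := by simp [smul_add, sum_add_distrib]

lemma multinomialSum_apply (m : ℕ) (x : (Fin r → ℕ) → M) :
    multinomialSum r m x = ∑ k ∈ Nat.antidiagonalTuple r m, Nat.multinomial univ k • x k :=
  rfl

lemma multinomialSum_zero (x : (Fin r → ℕ) → M) : multinomialSum r 0 x = x 0 := by
  simp [multinomialSum_apply, Nat.antidiagonalTuple_zero_right, Nat.multinomial]

lemma AddMonoidHom.map_multinomialSum (L : M →+ N) (m : ℕ) (x : (Fin r → ℕ) → M) :
    L (multinomialSum r m x) = multinomialSum r m (L ∘ x) := by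
  simp [multinomialSum_apply, map_sum, map_nsmul]

def shiftSum (x : (Fin r → ℕ) → M) (k : Fin r → ℕ) : M :=
  ∑ j, x (k + Pi.single j 1)

noncomputable def evalMonomials (x : (Fin r → ℕ) → M) : MvPolynomial (Fin r) ℕ →ₗ[ℕ] M :=
  (basisMonomials (Fin r) ℕ).constr ℕ fun d ↦ x d

lemma evalMonomials_monomial (x : (Fin r → ℕ) → M) (d : Fin r →₀ ℕ) (c : ℕ) :
    evalMonomials x (monomial d c) = c • x d := by
  have h := (basisMonomials (Fin r) ℕ).constr_basis ℕ (fun d ↦ x d) d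
  rw [coe_basisMonomials] at h
  rw [← h, evalMonomials, ← map_nsmul, smul_monomial, smul_eq_mul, mul_one]

lemma evalMonomials_sum_X_pow (x : (Fin r → ℕ) → M) (m : ℕ) :
    evalMonomials x ((∑ j, X j) ^ m) = multinomialSum r m x := by
  rw [sum_pow_eq_sum_piAntidiag, piAntidiag_univ_fin_eq_antidiagonalTuple, map_sum,
    multinomialSum_apply]
  refine sum_congr rfl fun k _ ↦ ?_
  rw [prod_X_pow, ← nsmul_eq_mul, map_nsmul, evalMonomials_monomial, one_smul]
  congr
  ext i
  simp

lemma evalMonomials_X_mul (x : (Fin r → ℕ) → M) (j : Fin r) (p : MvPolynomial (Fin r) ℕ) :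
    evalMonomials x (X j * p) = evalMonomials (fun k ↦ x (k + Pi.single j 1)) p := by
  induction p using MvPolynomial.induction_on' with
  | monomial d c =>
    rw [← pow_one (X j), ← monomial_single_add, evalMonomials_monomial, evalMonomials_monomial,
      Finsupp.coe_add, Finsupp.single_eq_pi_single, add_comm]
  | add p q hp hq => rw [mul_add, map_add, map_add, hp, hq]

lemma evalMonomials_shiftSum (x : (Fin r → ℕ) → M) (p : MvPolynomial (Fin r) ℕ) :
    evalMonomials (shiftSum x) p = ∑ j, evalMonomials (fun k ↦ x (k + Pi.single j 1)) p := by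
  simp only [evalMonomials, shiftSum, ← LinearMap.sum_apply, ← map_sum]
  congr
  ext
  simp

/-- Pascal's rule for multinomial coefficients, read off from `(∑ j, X j) ^ (m + 1)`. -/
lemma multinomialSum_succ (m : ℕ) (x : (Fin r → ℕ) → M) :
    multinomialSum r (m + 1) x = multinomialSum r m (shiftSum x) := by
  simp only [← evalMonomials_sum_X_pow, pow_succ', sum_mul, map_sum, evalMonomials_X_mul,
    evalMonomials_shiftSum]

lemma iterate_eq_multinomialSum (L : M →+ M) (T : (Fin r → ℕ) → M)
    (hT : ∀ k, L (T k) = shiftSum T k) (m : ℕ) :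
    L^[m] (T 0) = multinomialSum r m T := by
  induction m with
  | zero => rw [multinomialSum_zero, Function.iterate_zero_apply]
  | succ m ih =>
    rw [Function.iterate_succ_apply', ih, L.map_multinomialSum, multinomialSum_succ,
      show ⇑L ∘ T = shiftSum T from _root_.funext hT]

end MultinomialSum

lemma MvPolynomial.pderiv_comm {σ R : Type*} [CommSemiring R] (i j : σ) (p : MvPolynomial σ R) :
    pderiv i (pderiv j p) = pderiv j (pderiv i p) := by
  classical
  induction p using MvPolynomial.induction_on' with
  | monomial s a =>
    simp only [pderiv_monomial]
    rcases eq_or_ne i j with rfl | hij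
    · rfl
    · simp only [Finsupp.tsub_apply, Finsupp.single_apply, if_neg hij, if_neg hij.symm,
        tsub_zero]
      rw [tsub_right_comm]
      ring_nf
  | add p q hp hq => simp only [map_add, hp, hq]

section FoldrIterate

variable {ι α : Type*} (F : ι → α → α)

lemma List.apply_foldr_iterate {D : α → α} (hD : ∀ i, Function.Commute D (F i)) (l : List ι)
    (s : ι → ℕ) (p : α) :
    D (l.foldr (fun i acc ↦ (F i)^[s i] acc) p) = l.foldr (fun i acc ↦ (F i)^[s i] acc) (D p) := by
  induction l with
  | nil => rfl
  | cons i l ih => simp only [List.foldr_cons, ← ih, ((hD i).iterate_right (s i)).eq]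

lemma List.foldr_iterate_add (hF : ∀ i j, Function.Commute (F i) (F j)) (l : List ι)
    (s t : ι → ℕ) (p : α) :
    l.foldr (fun i acc ↦ (F i)^[(s + t) i] acc) p =
      l.foldr (fun i acc ↦ (F i)^[s i] acc) (l.foldr (fun i acc ↦ (F i)^[t i] acc) p) := by
  induction l with
  | nil => rfl
  | cons i l ih =>
    rw [List.foldr_cons, List.foldr_cons, List.foldr_cons, ih, Pi.add_apply,
      Function.iterate_add_apply, l.apply_foldr_iterate F (fun j ↦ (hF i j).iterate_left (t i))]

lemma List.foldr_iterate_single [DecidableEq ι] (l : List ι) (j : ι) (p : α) :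
    l.foldr (fun i acc ↦ (F i)^[(Pi.single j 1 : ι → ℕ) i] acc) p = (F j)^[l.count j] p := by
  induction l with
  | nil => rfl
  | cons i l ih =>
    rcases eq_or_ne i j with rfl | hij
    · simp [ih, ← Function.iterate_succ_apply' (F i)]
    · simp [ih, hij]

end FoldrIterate

section Laplacian

variable {n : ℕ}

lemma mderiv_zero (p : MvPolynomial (Fin n) ℂ) : mderiv 0 p = p := by
  simp [mderiv]

lemma mderiv_add (s t : Fin n → ℕ) (p : MvPolynomial (Fin n) ℂ) :
    mderiv (s + t) p = mderiv s (mderiv t p) :=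
  (List.finRange n).foldr_iterate_add _ (fun i j ↦ pderiv_comm i j) s t p

lemma mderiv_single (j : Fin n) (p : MvPolynomial (Fin n) ℂ) :
    mderiv (Pi.single j 1) p = pderiv j p := by
  rw [mderiv, List.foldr_iterate_single,
    List.count_eq_one_of_mem (List.nodup_finRange n) (List.mem_finRange j), Function.iterate_one]

lemma mderiv_add_single (s : Fin n → ℕ) (j : Fin n) (p : MvPolynomial (Fin n) ℂ) :
    mderiv (s + Pi.single j 1) p = pderiv j (mderiv s p) := by
  rw [add_comm, mderiv_add, mderiv_single]

lemma lap_pderiv (i : Fin n) (p : MvPolynomial (Fin n) ℂ) :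
    lap (pderiv i p) = pderiv i (lap p) := by
  simp only [lap, map_sum, pderiv_comm i]

lemma lap_mderiv (s : Fin n → ℕ) (p : MvPolynomial (Fin n) ℂ) :
    lap (mderiv s p) = mderiv s (lap p) :=
  (List.finRange n).apply_foldr_iterate _ (fun i ↦ lap_pderiv i) s p

lemma lap_mul (f g : MvPolynomial (Fin n) ℂ) :
    lap (f * g) = lap f * g + f * lap g + 2 • ∑ i, pderiv i f * pderiv i g := by
  simp only [lap, pderiv_mul, map_add, Finset.sum_add_distrib, Finset.sum_mul, Finset.mul_sum,
    two_nsmul]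
  abel

noncomputable def lapHom : MvPolynomial (Fin n) ℂ →+ MvPolynomial (Fin n) ℂ :=
  AddMonoidHom.mk' lap fun f g ↦ by simp only [lap, map_add, Finset.sum_add_distrib]

lemma coe_lapHom : ⇑(lapHom : MvPolynomial (Fin n) ℂ →+ _) = lap := rfl

/-- For `b = 1` this is `∇f · ∇g`. -/
noncomputable def gradPairing (b : ℕ) (f g : MvPolynomial (Fin n) ℂ) : MvPolynomial (Fin n) ℂ :=
  multinomialSum n b fun s ↦ mderiv s f * mderiv s g

lemma gradPairing_zero (f g : MvPolynomial (Fin n) ℂ) : gradPairing 0 f g = f * g := by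
  rw [gradPairing, multinomialSum_zero, mderiv_zero, mderiv_zero]

lemma lap_gradPairing (b : ℕ) (f g : MvPolynomial (Fin n) ℂ) :
    lap (gradPairing b f g) =
      gradPairing b (lap f) g + gradPairing b f (lap g) + 2 • gradPairing (b + 1) f g := by
  rw [gradPairing, ← coe_lapHom, lapHom.map_multinomialSum, gradPairing, gradPairing, gradPairing,
    multinomialSum_succ, ← map_nsmul, ← map_add, ← map_add]
  congr 1
  ext1 s
  simp only [Function.comp_apply, coe_lapHom, lap_mul, lap_mderiv, Pi.add_apply, Pi.smul_apply,
    shiftSum, mderiv_add_single]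

noncomputable def leibnizTerm (f g : MvPolynomial (Fin n) ℂ) (k : Fin 3 → ℕ) :
    MvPolynomial (Fin n) ℂ :=
  2 ^ k 1 • gradPairing (k 1) (lap^[k 0] f) (lap^[k 2] g)

lemma leibnizTerm_zero (f g : MvPolynomial (Fin n) ℂ) : leibnizTerm f g 0 = f * g := by
  rw [leibnizTerm, Pi.zero_apply, Pi.zero_apply, Pi.zero_apply, gradPairing_zero, pow_zero,
    one_smul, Function.iterate_zero_apply, Function.iterate_zero_apply]

lemma lap_leibnizTerm (f g : MvPolynomial (Fin n) ℂ) (k : Fin 3 → ℕ) :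
    lap (leibnizTerm f g k) = shiftSum (leibnizTerm f g) k := by
  rw [leibnizTerm, ← coe_lapHom, map_nsmul, coe_lapHom, lap_gradPairing]
  simp only [shiftSum, leibnizTerm, Fin.sum_univ_three, Pi.add_apply, Pi.single_apply,
    Fin.reduceEq, if_true, if_false, add_zero, Function.iterate_succ_apply']
  module

end Laplacian

theorem laplacian_power_leibniz_general {n : ℕ} (f g : MvPolynomial (Fin n) ℂ) (m : ℕ) :
    lap^[m] (f * g) =
      ∑ k ∈ Finset.Nat.antidiagonalTuple 3 m,
        ∑ s ∈ Finset.Nat.antidiagonalTuple n (k 1),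
          ((2 ^ (k 1) * Nat.multinomial Finset.univ k * Nat.multinomial Finset.univ s : ℕ) : ℂ)
            • (mderiv s (lap^[k 0] f) * mderiv s (lap^[k 2] g)) := by
  have h := iterate_eq_multinomialSum lapHom (leibnizTerm f g) (lap_leibnizTerm f g) m
  rw [coe_lapHom, leibnizTerm_zero] at h
  rw [h, multinomialSum_apply]
  refine Finset.sum_congr rfl fun k _ ↦ ?_
  simp only [leibnizTerm, gradPairing, multinomialSum_apply, Finset.smul_sum, smul_smul,
    Nat.cast_smul_eq_nsmul]
  refine Finset.sum_congr rfl fun s _ ↦ ?_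
  congr 1
  ring

/-- The generalized Leibniz identity for powers of the Laplacian. -/
theorem laplacian_power_leibniz {n : ℕ} (f g : MvPolynomial (Fin n) ℂ) (m : ℕ) (hm : 1 ≤ m) :
    lap^[m] (f * g) =
      ∑ k ∈ Finset.Nat.antidiagonalTuple 3 m,
        ∑ s ∈ Finset.Nat.antidiagonalTuple n (k 1),
          ((2 ^ (k 1) * Nat.multinomial Finset.univ k * Nat.multinomial Finset.univ s : ℕ) : ℂ)
            • (mderiv s (lap^[k 0] f) * mderiv s (lap^[k 2] g)) :=
  laplacian_power_leibniz_general f g m
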